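/- Let μ > 0, F ∈ ℝ², and 0 < a < b. Let u_δ(x) = (1/(4πμ))·(−ln|x|·F + ((x·F)/|x|²)·x) be the 2D Stokeslet velocity, and let χ̃(x) = χ(|x|) with χ(r) = (2r³ − 3(a+b)r² + 6abr + b²(b−3a))/(b−a)³ for a ≤ r ≤ b. Then for every x ∈ ℝ² with a < |x| < b, writing r = |x|: div(χ̃·u_δ)(x) = [3(1 − ln r)(r² − (a+b)r + ab) / (2πμ(b−a)³ r)] · (x·F). -/

import Mathlib

open Real MeasureTheory

noncomputable section

/-- Euclidean inner product on `Fin d → ℝ`. -/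
def dot {d : ℕ} (x y : Fin d → ℝ) : ℝ := ∑ i, x i * y i

/-- Euclidean norm on `Fin d → ℝ`. -/
def eunorm {d : ℕ} (x : Fin d → ℝ) : ℝ := Real.sqrt (∑ i, (x i) ^ 2)

/-- `i`-th partial derivative of a scalar field. -/
def pd {d : ℕ} (i : Fin d) (f : (Fin d → ℝ) → ℝ) (x : Fin d → ℝ) : ℝ :=
  fderiv ℝ f x (Pi.single i 1)

/-- Laplacian (sum of second partial derivatives) of a scalar field. -/
def lap {d : ℕ} (f : (Fin d → ℝ) → ℝ) (x : Fin d → ℝ) : ℝ :=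
  ∑ i, pd i (fun y => pd i f y) x

/-- Divergence of a vector field. -/
def divg {d : ℕ} (u : (Fin d → ℝ) → (Fin d → ℝ)) (x : Fin d → ℝ) : ℝ :=
  ∑ i, pd i (fun y => u y i) x

/-- 2D Stokeslet velocity. -/
def udelta2 (μ : ℝ) (F : Fin 2 → ℝ) (x : Fin 2 → ℝ) : Fin 2 → ℝ :=
  fun j => (1 / (4 * π * μ)) *
    ((- Real.log (eunorm x)) * F j + (dot x F / (eunorm x) ^ 2) * x j)

/-- The radial cubic cutoff profile: `1` for `r ≤ a`, a cubic polynomial on `[a, b]`,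
and `0` for `r ≥ b`. -/
def cutoff (a b r : ℝ) : ℝ :=
  if r ≤ a then 1
  else if r ≤ b then
    (2 * r ^ 3 - 3 * (a + b) * r ^ 2 + 6 * a * b * r + b ^ 2 * (b - 3 * a)) / (b - a) ^ 3
  else 0

/-! The product rule gives `div (χ̃ u) = χ'(r) (x / r) · u + χ̃ div u`. Away from the origin the
Stokeslet is divergence free: in dimension `d` the field `-log |y| F` has divergence `-(x·F)/r²`
and `(y·F) y / |y|²` has divergence `(d - 1)(x·F)/r²`, which cancel for `d = 2`. What remains is
`χ'(r)/r · x·u_δ`, with `x·u_δ = (1 - log r)(x·F)/(4πμ)` and `χ'(r) = 6(r² - (a+b)r + ab)/(b-a)³`. -/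

open Filter Topology

section PartialDerivatives

variable {d : ℕ} {f g : (Fin d → ℝ) → ℝ} {x : Fin d → ℝ}

theorem pd_congr_of_eventuallyEq (i : Fin d) (h : f =ᶠ[𝓝 x] g) : pd i f x = pd i g x := by
  rw [pd, pd, h.fderiv_eq]

theorem pd_const (i : Fin d) (c : ℝ) : pd i (fun _ => c) x = 0 := by
  simp [pd]

theorem pd_apply (i j : Fin d) : pd i (fun y => y j) x = (Pi.single i 1 : Fin d → ℝ) j := by
  simp [pd, (hasFDerivAt_apply j x).fderiv]

theorem pd_add (i : Fin d) (hf : DifferentiableAt ℝ f x) (hg : DifferentiableAt ℝ g x) :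
    pd i (fun y => f y + g y) x = pd i f x + pd i g x := by
  simp [pd, fderiv_fun_add hf hg]

theorem pd_mul (i : Fin d) (hf : DifferentiableAt ℝ f x) (hg : DifferentiableAt ℝ g x) :
    pd i (fun y => f y * g y) x = pd i f x * g x + f x * pd i g x := by
  simp only [pd, fderiv_fun_mul hf hg, add_apply, smul_apply, smul_eq_mul]
  ring

theorem pd_sum {ι : Type*} (s : Finset ι) {f : ι → (Fin d → ℝ) → ℝ} (i : Fin d)
    (hf : ∀ j ∈ s, DifferentiableAt ℝ (f j) x) :
    pd i (fun y => ∑ j ∈ s, f j y) x = ∑ j ∈ s, pd i (f j) x := by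
  simp [pd, fderiv_fun_sum hf]

theorem pd_comp {h : ℝ → ℝ} {h' : ℝ} (i : Fin d) (hh : HasDerivAt h h' (f x))
    (hf : DifferentiableAt ℝ f x) : pd i (fun y => h (f y)) x = h' * pd i f x := by
  simp [pd, fderiv_fun_comp x hh.differentiableAt hf, hh.deriv, mul_comm]

end PartialDerivatives

section EuclideanNorm

variable {d : ℕ} {x : Fin d → ℝ}

theorem dot_comm (x y : Fin d → ℝ) : dot x y = dot y x := by
  simp only [dot, mul_comm]

theorem dot_zero_left (y : Fin d → ℝ) : dot 0 y = 0 := by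
  simp only [dot, Pi.zero_apply, zero_mul, Finset.sum_const_zero]

theorem dot_add_left (x y z : Fin d → ℝ) : dot (x + y) z = dot x z + dot y z := by
  simp only [dot, Pi.add_apply, add_mul, Finset.sum_add_distrib]

theorem dot_smul_left (c : ℝ) (x y : Fin d → ℝ) : dot (c • x) y = c * dot x y := by
  simp only [dot, Pi.smul_apply, smul_eq_mul, mul_assoc, Finset.mul_sum]

theorem eunorm_sq (x : Fin d → ℝ) : eunorm x ^ 2 = dot x x := by
  rw [eunorm, Real.sq_sqrt (by positivity)]
  simp only [dot, sq]

theorem eunorm_eq_sqrt_dot_self : eunorm = fun x : Fin d → ℝ => √(dot x x) := by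
  ext x
  simp only [eunorm, dot, sq]

theorem dot_self_pos_of_eunorm_pos (hx : 0 < eunorm x) : 0 < dot x x := by
  rwa [eunorm_eq_sqrt_dot_self, Real.sqrt_pos] at hx

theorem continuous_eunorm : Continuous (eunorm (d := d)) := by
  unfold eunorm
  fun_prop

theorem differentiableAt_dot_self : DifferentiableAt ℝ (fun y : Fin d → ℝ => dot y y) x := by
  unfold dot
  fun_prop

theorem differentiableAt_eunorm (hx : 0 < eunorm x) : DifferentiableAt ℝ eunorm x := by
  rw [eunorm_eq_sqrt_dot_self]
  exact differentiableAt_dot_self.sqrt (dot_self_pos_of_eunorm_pos hx).ne'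

end EuclideanNorm

section Gradient

variable {d : ℕ} {f g : (Fin d → ℝ) → ℝ} {x : Fin d → ℝ}

def grad (f : (Fin d → ℝ) → ℝ) (x : Fin d → ℝ) : Fin d → ℝ := fun i => pd i f x

theorem grad_const (c : ℝ) : grad (fun _ => c) x = 0 :=
  funext fun i => pd_const i c

theorem grad_mul (hf : DifferentiableAt ℝ f x) (hg : DifferentiableAt ℝ g x) :
    grad (fun y => f y * g y) x = g x • grad f x + f x • grad g x := by
  ext i
  simp only [grad, pd_mul i hf hg, Pi.add_apply, Pi.smul_apply, smul_eq_mul]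
  ring

theorem grad_comp {h : ℝ → ℝ} {h' : ℝ} (hh : HasDerivAt h h' (f x))
    (hf : DifferentiableAt ℝ f x) : grad (fun y => h (f y)) x = h' • grad f x :=
  funext fun i => pd_comp i hh hf

theorem grad_dot_left (F : Fin d → ℝ) : grad (fun y => dot y F) x = F := by
  ext i
  simp only [grad, dot]
  rw [pd_sum _ i fun j _ => by fun_prop]
  have hterm (j : Fin d) : pd i (fun y => y j * F j) x = (Pi.single i 1 : Fin d → ℝ) j * F j := by
    rw [pd_mul i (differentiableAt_apply j x) (differentiableAt_const _), pd_apply, pd_const]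
    ring
  simp [hterm, Pi.single_apply]

theorem grad_dot_self : grad (fun y => dot y y) x = (2 : ℝ) • x := by
  ext i
  simp only [grad, dot]
  rw [pd_sum _ i fun j _ => by fun_prop]
  have hterm (j : Fin d) :
      pd i (fun y => y j * y j) x = 2 * (Pi.single i 1 : Fin d → ℝ) j * x j := by
    rw [pd_mul i (differentiableAt_apply j x) (differentiableAt_apply j x), pd_apply]
    ring
  simp [hterm, Pi.single_apply]

theorem grad_eunorm (hx : 0 < eunorm x) : grad eunorm x = (eunorm x)⁻¹ • x := by
  have hpos := dot_self_pos_of_eunorm_pos hx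
  rw [eunorm_eq_sqrt_dot_self, grad_comp (f := fun y => dot y y)
      (Real.hasDerivAt_sqrt hpos.ne') differentiableAt_dot_self, grad_dot_self, smul_smul]
  congr 1
  field_simp

theorem grad_comp_eunorm {h : ℝ → ℝ} {h' : ℝ} (hh : HasDerivAt h h' (eunorm x))
    (hx : 0 < eunorm x) : grad (fun y => h (eunorm y)) x = (h' / eunorm x) • x := by
  rw [grad_comp hh (differentiableAt_eunorm hx), grad_eunorm hx, smul_smul, div_eq_mul_inv]

end Gradient

section Divergence

variable {d : ℕ} {f : (Fin d → ℝ) → ℝ} {u v : (Fin d → ℝ) → Fin d → ℝ} {x : Fin d → ℝ}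

theorem divg_congr_of_eventuallyEq (h : u =ᶠ[𝓝 x] v) : divg u x = divg v x :=
  Finset.sum_congr rfl fun i _ => pd_congr_of_eventuallyEq i (h.mono fun _ hy => congrFun hy i)

theorem divg_const (F : Fin d → ℝ) : divg (fun _ => F) x = 0 := by
  simp only [divg, pd_const, Finset.sum_const_zero]

theorem divg_id : divg (fun y => y) x = d := by
  simp [divg, pd_apply]

theorem divg_add (hu : ∀ j, DifferentiableAt ℝ (fun y => u y j) x)
    (hv : ∀ j, DifferentiableAt ℝ (fun y => v y j) x) :
    divg (fun y j => u y j + v y j) x = divg u x + divg v x := by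
  simp only [divg, pd_add _ (hu _) (hv _), Finset.sum_add_distrib]

theorem divg_mul (hf : DifferentiableAt ℝ f x) (hu : ∀ j, DifferentiableAt ℝ (fun y => u y j) x) :
    divg (fun y j => f y * u y j) x = dot (grad f x) (u x) + f x * divg u x := by
  simp only [divg, dot, grad, pd_mul _ hf (hu _), Finset.sum_add_distrib, Finset.mul_sum]

end Divergence

section RadialFields

variable {d : ℕ} {x : Fin d → ℝ}

theorem divg_neg_log_eunorm_mul (F : Fin d → ℝ) (hx : 0 < eunorm x) :
    divg (fun y j => -Real.log (eunorm y) * F j) x = -dot x F / eunorm x ^ 2 := by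
  have hlog : HasDerivAt (fun r => -Real.log r) (-(eunorm x)⁻¹) (eunorm x) :=
    (Real.hasDerivAt_log hx.ne').neg
  rw [divg_mul (f := fun y => -Real.log (eunorm y)) (u := fun _ => F)
      (hlog.differentiableAt.comp x (differentiableAt_eunorm hx))
      (fun _ => differentiableAt_const _),
    divg_const, grad_comp_eunorm hlog hx, dot_smul_left, mul_zero, add_zero]
  field_simp

theorem divg_dot_div_eunorm_sq_mul (F : Fin d → ℝ) (hx : 0 < eunorm x) :
    divg (fun y j => dot y F / eunorm y ^ 2 * y j) x = (d - 1) * dot x F / eunorm x ^ 2 := by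
  have hinv : HasDerivAt (fun r : ℝ => (r ^ 2)⁻¹) (-2 / eunorm x ^ 3) (eunorm x) := by
    refine ((hasDerivAt_id _).fun_pow 2).fun_inv (by positivity) |>.congr_deriv ?_
    field_simp
    ring
  have hn := differentiableAt_eunorm hx
  have hdot : DifferentiableAt ℝ (fun y => dot y F) x := by
    unfold dot
    fun_prop
  have hcoeff : (fun y => dot y F / eunorm y ^ 2) = fun y => dot y F * (eunorm y ^ 2)⁻¹ := by
    simp only [div_eq_mul_inv]
  rw [divg_mul (f := fun y => dot y F / eunorm y ^ 2) (u := fun y => y)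
      (by fun_prop (disch := positivity)) (fun j => differentiableAt_apply j x),
    divg_id, hcoeff, grad_mul hdot (by fun_prop (disch := positivity)), grad_dot_left,
    grad_comp_eunorm hinv hx]
  simp only [dot_add_left, dot_smul_left, dot_comm F x, ← eunorm_sq]
  field_simp
  ring

end RadialFields

section Stokeslet

variable (μ : ℝ) (F : Fin 2 → ℝ) {x : Fin 2 → ℝ}

theorem differentiableAt_udelta2 (hx : 0 < eunorm x) (j : Fin 2) :
    DifferentiableAt ℝ (fun y => udelta2 μ F y j) x := by
  have hn := differentiableAt_eunorm hx
  unfold udelta2 dot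
  fun_prop (disch := positivity)

theorem divg_udelta2 (hx : 0 < eunorm x) : divg (udelta2 μ F) x = 0 := by
  have hn := differentiableAt_eunorm hx
  change divg (fun y j => 1 / (4 * π * μ) *
    (-Real.log (eunorm y) * F j + dot y F / eunorm y ^ 2 * y j)) x = 0
  rw [divg_mul (differentiableAt_const _) (fun j => by unfold dot; fun_prop (disch := positivity)),
    grad_const, dot_zero_left, zero_add,
    divg_add (u := fun y j => -Real.log (eunorm y) * F j)
      (v := fun y j => dot y F / eunorm y ^ 2 * y j)
      (fun j => by fun_prop (disch := positivity))
      (fun j => by unfold dot; fun_prop (disch := positivity)),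
    divg_neg_log_eunorm_mul F hx, divg_dot_div_eunorm_sq_mul F hx]
  ring

theorem dot_udelta2 (hx : eunorm x ≠ 0) :
    dot x (udelta2 μ F x) = (1 - Real.log (eunorm x)) * dot x F / (4 * π * μ) := by
  have hu : udelta2 μ F x =
      (1 / (4 * π * μ)) • (-Real.log (eunorm x) • F + (dot x F / eunorm x ^ 2) • x) := rfl
  rw [dot_comm, hu, dot_smul_left, dot_add_left, dot_smul_left, dot_smul_left, dot_comm F,
    ← eunorm_sq]
  field_simp
  ring

end Stokeslet

section Cutoff

def cutoffCubic (a b r : ℝ) : ℝ :=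
  (2 * r ^ 3 - 3 * (a + b) * r ^ 2 + 6 * a * b * r + b ^ 2 * (b - 3 * a)) / (b - a) ^ 3

theorem cutoff_eventuallyEq_cutoffCubic {a b r : ℝ} (ha : a < r) (hb : r < b) :
    cutoff a b =ᶠ[𝓝 r] cutoffCubic a b := by
  filter_upwards [Ioo_mem_nhds ha hb] with s hs
  rw [cutoff, if_neg (not_le.mpr hs.1), if_pos hs.2.le, cutoffCubic]

theorem hasDerivAt_cutoffCubic (a b r : ℝ) :
    HasDerivAt (cutoffCubic a b) (6 * (r ^ 2 - (a + b) * r + a * b) / (b - a) ^ 3) r := by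
  refine HasDerivAt.div_const ?_ _
  refine (((((hasDerivAt_pow 3 r).const_mul 2).sub
    ((hasDerivAt_pow 2 r).const_mul (3 * (a + b)))).add
    ((hasDerivAt_id r).const_mul (6 * a * b))).add_const (b ^ 2 * (b - 3 * a))).congr_deriv ?_
  norm_num
  ring

end Cutoff

theorem div_truncated_stokeslet2d_general (μ : ℝ) (F : Fin 2 → ℝ)
    (a b : ℝ) (ha : 0 < a)
    (x : Fin 2 → ℝ) (hxa : a < eunorm x) (hxb : eunorm x < b) :
    divg (fun y j => cutoff a b (eunorm y) * udelta2 μ F y j) x =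
      (3 * (1 - Real.log (eunorm x)) * ((eunorm x) ^ 2 - (a + b) * eunorm x + a * b) /
        (2 * π * μ * (b - a) ^ 3 * eunorm x)) * dot x F := by
  have hx : 0 < eunorm x := ha.trans hxa
  have hχ := hasDerivAt_cutoffCubic a b (eunorm x)
  have hlocal : (fun y j => cutoff a b (eunorm y) * udelta2 μ F y j) =ᶠ[𝓝 x]
      fun y j => cutoffCubic a b (eunorm y) * udelta2 μ F y j :=
    ((cutoff_eventuallyEq_cutoffCubic hxa hxb).comp_tendsto (continuous_eunorm.tendsto x)).mono
      fun y hy => by simp only [Function.comp_apply] at hy; simp only [hy]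
  rw [divg_congr_of_eventuallyEq hlocal,
    divg_mul (f := fun y => cutoffCubic a b (eunorm y))
      (hχ.differentiableAt.comp x (differentiableAt_eunorm hx)) (differentiableAt_udelta2 μ F hx),
    grad_comp_eunorm hχ hx, divg_udelta2 μ F hx, dot_smul_left, dot_udelta2 μ F hx.ne']
  -- `μ` may vanish, so no `field_simp`; as an atom, the cube stays a monomial under `ring`'s inverse.
  generalize (b - a) ^ 3 = c
  ring

/-- Divergence of the truncated 2D Stokeslet velocity `u₀ = χ̃ u_δ` on the annulus
`a < |x| < b`. -/
theorem div_truncated_stokeslet2d (μ : ℝ) (hμ : 0 < μ) (F : Fin 2 → ℝ)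
    (a b : ℝ) (ha : 0 < a) (hab : a < b)
    (x : Fin 2 → ℝ) (hxa : a < eunorm x) (hxb : eunorm x < b) :
    divg (fun y j => cutoff a b (eunorm y) * udelta2 μ F y j) x =
      (3 * (1 - Real.log (eunorm x)) * ((eunorm x) ^ 2 - (a + b) * eunorm x + a * b) /
        (2 * π * μ * (b - a) ^ 3 * eunorm x)) * dot x F :=
  div_truncated_stokeslet2d_general μ F a b ha x hxa hxb
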